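/- Let θᵘ be a real number with 0 < θᵘ ≤ π/2. Then for every real θ with −θᵘ ≤ θ ≤ θᵘ, sin θ ≥ cos(θᵘ/2)·θ − sin(θᵘ/2) + cos(θᵘ/2)·(θᵘ/2). -/

import Mathlib

open Real

open Set


lemma sin_ge_sub_cube' {x : ℝ} (hx : 0 ≤ x) : x - x ^ 3 / 6 ≤ sin x := by
  have hder : ∀ v : ℝ, HasDerivAt (fun v : ℝ => sin v - (v - v ^ 3 / 6))
      (cos v - (1 - v ^ 2 / 2)) v := by
    intro v
    have h1 := Real.hasDerivAt_sin v
    have h2 : HasDerivAt (fun v : ℝ => v - v ^ 3 / 6) (1 - v ^ 2 / 2) v := by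
      have := ((hasDerivAt_pow 3 v).div_const 6)
      have := (hasDerivAt_id v).sub this
      exact this.congr_deriv (by ring)
    exact h1.sub h2
  have hmono : MonotoneOn (fun v : ℝ => sin v - (v - v ^ 3 / 6)) (Ici 0) := by
    apply monotoneOn_of_deriv_nonneg (convex_Ici 0)
    · exact (Real.continuous_sin.sub (by continuity)).continuousOn
    · intro v hv
      exact ((hder v).differentiableAt).differentiableWithinAt
    · intro v hv
      rw [(hder v).deriv]
      have := Real.one_sub_sq_div_two_le_cos (x := v)
      linarith
  have h0 : (fun v : ℝ => sin v - (v - v ^ 3 / 6)) 0 ≤ (fun v : ℝ => sin v - (v - v ^ 3 / 6)) x :=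
    hmono (by simp) (by simpa using hx) hx
  simp at h0
  linarith

lemma cos_le_quartic' {x : ℝ} (hx : 0 ≤ x) : cos x ≤ 1 - x ^ 2 / 2 + x ^ 4 / 24 := by
  have hder : ∀ v : ℝ, HasDerivAt (fun v : ℝ => 1 - v ^ 2 / 2 + v ^ 4 / 24 - cos v)
      (sin v - (v - v ^ 3 / 6)) v := by
    intro v
    have h1 : HasDerivAt (fun v : ℝ => 1 - v ^ 2 / 2 + v ^ 4 / 24)
        (-(v - v ^ 3 / 6)) v := by
      have h2 := (hasDerivAt_pow 2 v).div_const 2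
      have h3 := (hasDerivAt_pow 4 v).div_const 24
      have := ((hasDerivAt_const v (1:ℝ)).sub h2).add h3
      exact this.congr_deriv (by ring)
    have := h1.sub (Real.hasDerivAt_cos v)
    exact this.congr_deriv (by ring)
  have hmono : MonotoneOn (fun v : ℝ => 1 - v ^ 2 / 2 + v ^ 4 / 24 - cos v) (Ici 0) := by
    apply monotoneOn_of_deriv_nonneg (convex_Ici 0)
    · exact ((by continuity : Continuous fun v : ℝ => 1 - v ^ 2 / 2 + v ^ 4 / 24).sub
        Real.continuous_cos).continuousOn
    · intro v hv
      exact ((hder v).differentiableAt).differentiableWithinAt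
    · intro v hv
      rw [(hder v).deriv]
      have hv0 : (0:ℝ) ≤ v := le_of_lt (by simpa using hv)
      have := sin_ge_sub_cube' hv0
      linarith
  have h0 : (fun v : ℝ => 1 - v ^ 2 / 2 + v ^ 4 / 24 - cos v) 0
      ≤ (fun v : ℝ => 1 - v ^ 2 / 2 + v ^ 4 / 24 - cos v) x :=
    hmono (by simp) (by simpa using hx) hx
  simp at h0
  linarith

lemma endpoint_key {c : ℝ} (hc : 0 < c) (hc' : c ≤ π / 4) :
    3 * c * cos c ≤ sin (2 * c) + sin c := by
  have hs : c - c ^ 3 / 6 ≤ sin c := sin_ge_sub_cube' hc.le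
  have hk : cos c ≤ 1 - c ^ 2 / 2 + c ^ 4 / 24 := cos_le_quartic' hc.le
  have hk2 : 1 - c ^ 2 / 2 ≤ cos c := Real.one_sub_sq_div_two_le_cos
  have hcpos : (0:ℝ) < cos c := by
    have : c < π / 2 := lt_of_le_of_lt hc' (by linarith [pi_pos])
    exact Real.cos_pos_of_mem_Ioo ⟨by linarith, this⟩
  have hc1 : c ≤ 1 := le_trans hc' (by nlinarith [pi_lt_d2])
  rw [Real.sin_two_mul]
  have h2k : (0:ℝ) < 2 * cos c + 1 := by linarith
  have h1 : (c - c ^ 3 / 6) * (2 * cos c + 1) ≤ sin c * (2 * cos c + 1) :=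
    mul_le_mul_of_nonneg_right hs h2k.le
  have h2 : c * (c ^ 2 / 2 - c ^ 4 / 24) ≤ c * (1 - cos c) :=
    mul_le_mul_of_nonneg_left (by linarith) hc.le
  have h3 : (c ^ 3 / 6) * (2 * cos c + 1) ≤ (c ^ 3 / 6) * (3 - c ^ 2 + c ^ 4 / 12) := by
    apply mul_le_mul_of_nonneg_left (by linarith) (by positivity)
  have h4 : c ^ 7 ≤ c ^ 5 := by
    calc c ^ 7 = c ^ 5 * c ^ 2 := by ring
    _ ≤ c ^ 5 * 1 := by
      have hc2 : c ^ 2 ≤ 1 := by nlinarith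
      exact mul_le_mul_of_nonneg_left hc2 (by positivity)
    _ = c ^ 5 := by ring
  nlinarith [h1, h2, h3, h4]

/-- Linear under-estimator of sine (reflection of the tangent line at θᵘ/2):
for 0 < θᵘ ≤ π/2 and θ ∈ [−θᵘ, θᵘ],
sin θ ≥ cos(θᵘ/2)·θ − sin(θᵘ/2) + cos(θᵘ/2)·(θᵘ/2). -/
theorem sin_tangent_underestimator (θu : ℝ) (hpos : 0 < θu) (hle : θu ≤ π / 2) :
    ∀ θ : ℝ, -θu ≤ θ → θ ≤ θu →
      cos (θu / 2) * θ - sin (θu / 2) + cos (θu / 2) * (θu / 2) ≤ sin θ := by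
  intro θ hθl hθr
  set c : ℝ := θu / 2 with hc
  have hcpos : 0 < c := by positivity
  have hcpi4 : c ≤ π / 4 := by rw [hc]; linarith
  have hpi : (0:ℝ) < π := pi_pos
  have h2c : 2 * c ≤ π / 2 := by linarith
  -- the function F v = sin v + sin c - (v + c) * cos c
  set F : ℝ → ℝ := fun v => sin v + sin c - (v + c) * cos c with hF
  have hder : ∀ v : ℝ, HasDerivAt F (cos v - cos c) v := by
    intro v
    have h1 := (Real.hasDerivAt_sin v).add_const (sin c)
    have h2 : HasDerivAt (fun v : ℝ => (v + c) * cos c) (cos c) v := by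
      have := ((hasDerivAt_id v).add_const c).mul_const (cos c)
      simpa using this
    exact h1.sub h2
  have hcont : Continuous F := by
    apply Continuous.sub (Real.continuous_sin.add continuous_const)
    continuity
  have hFnegc : F (-c) = 0 := by
    simp [hF, Real.sin_neg]
  -- goal rephrased
  have goal_iff : cos c * θ - sin c + cos c * c ≤ sin θ ↔ 0 ≤ F θ := by
    constructor <;> intro h <;> simp only [hF] at * <;> nlinarith
  rw [goal_iff]
  -- monotonicity facts
  have key_mono : MonotoneOn F (Icc (-c) c) := by
    apply monotoneOn_of_deriv_nonneg (convex_Icc _ _) hcont.continuousOn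
    · intro v _; exact ((hder v).differentiableAt).differentiableWithinAt
    · intro v hv
      rw [interior_Icc] at hv
      rw [(hder v).deriv]
      have habs : |v| ≤ c := abs_le.2 ⟨hv.1.le, hv.2.le⟩
      have : cos c ≤ cos |v| :=
        Real.cos_le_cos_of_nonneg_of_le_pi (abs_nonneg v) (by linarith) habs
      rw [Real.cos_abs] at this
      linarith
  have key_anti_left : AntitoneOn F (Icc (-(2*c)) (-c)) := by
    apply antitoneOn_of_deriv_nonpos (convex_Icc _ _) hcont.continuousOn
    · intro v _; exact ((hder v).differentiableAt).differentiableWithinAt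
    · intro v hv
      rw [interior_Icc] at hv
      obtain ⟨hv1, hv2⟩ := hv
      rw [(hder v).deriv]
      have hvneg : v < 0 := by linarith
      have h1 : c ≤ |v| := by
        rw [abs_of_neg hvneg]; linarith
      have h2 : |v| ≤ π := by
        rw [abs_of_neg hvneg]; linarith
      have : cos |v| ≤ cos c :=
        Real.cos_le_cos_of_nonneg_of_le_pi hcpos.le h2 h1
      rw [Real.cos_abs] at this
      linarith
  have key_anti_right : AntitoneOn F (Icc c (2*c)) := by
    apply antitoneOn_of_deriv_nonpos (convex_Icc _ _) hcont.continuousOn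
    · intro v _; exact ((hder v).differentiableAt).differentiableWithinAt
    · intro v hv
      rw [interior_Icc] at hv
      have : cos v ≤ cos c :=
        Real.cos_le_cos_of_nonneg_of_le_pi hcpos.le (by linarith [hv.2]) hv.1.le
      rw [(hder v).deriv]
      linarith
  have hθl' : -(2*c) ≤ θ := by rw [hc]; linarith
  have hθr' : θ ≤ 2*c := by rw [hc]; linarith
  rcases le_or_gt θ (-c) with h | h
  · have := key_anti_left ⟨hθl', h⟩ ⟨by linarith, le_refl _⟩ h
    rw [hFnegc] at this
    exact this
  · rcases le_or_gt θ c with h' | h'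
    · have := key_mono ⟨le_refl _, by linarith⟩ ⟨h.le, h'⟩ h.le
      rw [hFnegc] at this
      exact this
    · have hend := key_anti_right ⟨h'.le, hθr'⟩ ⟨by linarith, le_refl _⟩ hθr'
      have hkey := endpoint_key hcpos hcpi4
      have hF2c : 3 * c * cos c ≤ sin (2*c) + sin c := hkey
      have : 0 ≤ F (2*c) := by
        simp only [hF]
        nlinarith
      linarith
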